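/- Let λ > 0 and let G₂(b) = (b₁/(2π|b|²))(1 − e^{−|b|²/(2λ²)}) for b ∈ ℝ² \ {0}, extended smoothly by 0 at b = 0. Then for all nonnegative integers α₁, α₂, the mixed derivative ∂^{α₁}_{b₁} ∂^{α₂}_{b₂} G₂(b) evaluated at b = 0 equals (1/(2π)) (1/(2λ²))^{(α₁+α₂+1)/2} ((−1)^{(α₁+α₂−1)/2}/((α₁+α₂+1)/2)!) C((α₁+α₂−1)/2, (α₁−1)/2) (α₁!)(α₂!) when α₁ is odd and α₂ is even, and equals 0 otherwise. -/

import Mathlib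

/-!
For `b ≠ 0` we have `G₂(b) = b₁ g(|b|²)` with the entire function
`g(u) = (1 - e^{-u/(2λ²)})/(2πu) = ∑ cₙ uⁿ`, and both sides vanish at `b = 0`. Expanding
`(s² + t²)ⁿ` binomially turns `G₂(s, t)` into the absolutely convergent double series
`∑ c_{i+k} C(i+k, i) t^{2i} s^{2k+1}`. Differentiating `α₂` times in `t` and then `α₁` times in
`s` at the origin picks out `α₁! α₂!` times the coefficient of `s^{α₁} t^{α₂}`, which vanishes
unless `α₁` is odd and `α₂` is even.
-/

open MeasureTheory Real

/-- first partial derivative `∂_{x₁}` of a function on `ℝ²`. -/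
noncomputable def pd1 (f : ℝ × ℝ → ℝ) : ℝ × ℝ → ℝ := fun x => deriv (fun s => f (s, x.2)) x.1

/-- second partial derivative `∂_{x₂}` of a function on `ℝ²`. -/
noncomputable def pd2 (f : ℝ × ℝ → ℝ) : ℝ × ℝ → ℝ := fun x => deriv (fun s => f (x.1, s)) x.2

/-- mixed partial derivative `∂^{k₁}_{x₁} ∂^{k₂}_{x₂}`. -/
noncomputable def md (k1 k2 : ℕ) (f : ℝ × ℝ → ℝ) : ℝ × ℝ → ℝ := pd1^[k1] (pd2^[k2] f)

/-- the Gaussian vorticity `φ₀₀(x;λ) = (1/(πλ²)) exp(−|x|²/λ²)`. -/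
noncomputable def phi00 (lam : ℝ) (x : ℝ × ℝ) : ℝ :=
  (1 / (π * lam ^ 2)) * Real.exp (-(x.1 ^ 2 + x.2 ^ 2) / lam ^ 2)

/-- first component of the Lamb–Oseen velocity field `V₀₀(x;λ)`. -/
noncomputable def V001 (lam : ℝ) (x : ℝ × ℝ) : ℝ :=
  (1 / (2 * π)) * (-x.2 / (x.1 ^ 2 + x.2 ^ 2)) * (1 - Real.exp (-(x.1 ^ 2 + x.2 ^ 2) / lam ^ 2))

/-- second component of the Lamb–Oseen velocity field `V₀₀(x;λ)`. -/
noncomputable def V002 (lam : ℝ) (x : ℝ × ℝ) : ℝ :=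
  (1 / (2 * π)) * (x.1 / (x.1 ^ 2 + x.2 ^ 2)) * (1 - Real.exp (-(x.1 ^ 2 + x.2 ^ 2) / lam ^ 2))

/-- two-dimensional Hermite polynomial `H_{n₁,n₂}(z;λ)` defined via the generating function. -/
noncomputable def hpoly (lam : ℝ) (n1 n2 : ℕ) (z : ℝ × ℝ) : ℝ :=
  md n1 n2 (fun τ => Real.exp ((2 * (τ.1 * z.1 + τ.2 * z.2) - (τ.1 ^ 2 + τ.2 ^ 2)) / lam ^ 2)) (0, 0)

/-- Hermite function `φ_{k₁,k₂}(x;λ) = ∂^{k₁}_{x₁} ∂^{k₂}_{x₂} φ₀₀(x;λ)`. -/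
noncomputable def hfun (lam : ℝ) (k1 k2 : ℕ) : ℝ × ℝ → ℝ := md k1 k2 (phi00 lam)

/-- second component of , extended by 0 at the origin. -/
noncomputable def G2 (lam : ℝ) (b : ℝ × ℝ) : ℝ :=
  if b = 0 then 0
  else (b.1 / (2 * π * (b.1 ^ 2 + b.2 ^ 2)))
    * (1 - Real.exp (-(b.1 ^ 2 + b.2 ^ 2) / (2 * lam ^ 2)))


open Function Finset
open scoped Nat NNReal

theorem iterate_pd1_apply (k : ℕ) (f : ℝ × ℝ → ℝ) (x : ℝ × ℝ) :
    pd1^[k] f x = iteratedDeriv k (fun s => f (s, x.2)) x.1 := by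
  induction k generalizing f with
  | zero => rfl
  | succ k ih => rw [iterate_succ_apply, ih, iteratedDeriv_succ']; rfl

theorem iterate_pd2_apply (k : ℕ) (f : ℝ × ℝ → ℝ) (x : ℝ × ℝ) :
    pd2^[k] f x = iteratedDeriv k (fun t => f (x.1, t)) x.2 := by
  induction k generalizing f with
  | zero => rfl
  | succ k ih => rw [iterate_succ_apply, ih, iteratedDeriv_succ']; rfl

theorem md_apply (k1 k2 : ℕ) (f : ℝ × ℝ → ℝ) (x : ℝ × ℝ) :
    md k1 k2 f x = iteratedDeriv k1 (fun s => iteratedDeriv k2 (fun t => f (s, t)) x.2) x.1 := by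
  simp only [md, iterate_pd1_apply, iterate_pd2_apply]

open FormalMultilinearSeries in
theorem radius_ofScalars_eq_top_of_summable {c : ℕ → ℝ}
    (hc : ∀ x : ℝ, Summable fun n => c n * x ^ n) : (ofScalars ℝ c).radius = ⊤ :=
  ENNReal.eq_top_of_forall_nnreal_le fun r =>
    (ofScalars ℝ c).le_radius_of_tendsto (l := 0) <| by
      simpa [ofScalars_norm, norm_mul, norm_pow] using (hc r).tendsto_atTop_zero.norm

theorem summable_norm_mul_pow_of_summable {c : ℕ → ℝ}
    (hc : ∀ x : ℝ, Summable fun n => c n * x ^ n) (r : ℝ≥0) :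
    Summable fun n => ‖c n‖ * (r : ℝ) ^ n := by
  simpa [FormalMultilinearSeries.ofScalars_norm] using
    (FormalMultilinearSeries.ofScalars ℝ c).summable_norm_mul_pow
      (by simp [radius_ofScalars_eq_top_of_summable hc] : (r : ENNReal) < _)

theorem iteratedDeriv_zero_eq_factorial_mul_of_hasSum {c : ℕ → ℝ} {g : ℝ → ℝ}
    (hg : ∀ x, HasSum (fun n => c n * x ^ n) (g x)) (n : ℕ) :
    iteratedDeriv n g 0 = n ! * c n := by
  have hps : HasFPowerSeriesOnBall g (FormalMultilinearSeries.ofScalars ℝ c) 0 ⊤ :=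
    { r_le := (radius_ofScalars_eq_top_of_summable fun x => (hg x).summable).ge
      r_pos := ENNReal.zero_lt_top
      hasSum := fun {y} _ => by
        simpa [FormalMultilinearSeries.ofScalars_apply_eq, mul_comm] using hg y }
  have hcoeff := congrFun (FormalMultilinearSeries.ofScalars_series_injective ℝ ℝ
    (hps.hasFPowerSeriesAt.eq_formalMultilinearSeries hps.analyticAt.hasFPowerSeriesAt)) n
  rw [hcoeff, mul_div_cancel₀ _ (by positivity)]

theorem hasSum_extend_mul_pow {ι : Type*} {e : ι → ℕ} (he : Injective e) {d : ι → ℝ} {t a : ℝ}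
    (h : HasSum (fun i => d i * t ^ e i) a) :
    HasSum (fun n => extend e d 0 n * t ^ n) a := by
  refine (he.hasSum_iff fun n hn => ?_).mp ?_
  · rw [extend_apply' _ _ _ (by simpa using hn), Pi.zero_apply, zero_mul]
  · simpa only [comp_def, he.extend_apply] using h

theorem sum_antidiagonal_choose_mul_pow_mul_pow (c : ℕ → ℝ) (x y : ℝ) (n : ℕ) :
    ∑ p ∈ antidiagonal n, c (p.1 + p.2) * (p.1 + p.2).choose p.1 * x ^ p.1 * y ^ p.2
      = c n * (x + y) ^ n := by
  rw [Nat.sum_antidiagonal_eq_sum_range_succ_mk, add_pow, mul_sum]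
  refine sum_congr rfl fun k hk => ?_
  rw [Nat.add_sub_cancel' (Nat.lt_succ_iff.mp (mem_range.mp hk))]
  ring

theorem summable_choose_mul_pow_mul_pow_of_nonneg {c : ℕ → ℝ} (hc : ∀ n, 0 ≤ c n) {x y : ℝ}
    (hx : 0 ≤ x) (hy : 0 ≤ y) (hsum : Summable fun n => c n * (x + y) ^ n) :
    Summable fun p : ℕ × ℕ => c (p.1 + p.2) * (p.1 + p.2).choose p.1 * x ^ p.1 * y ^ p.2 := by
  rw [← HasAntidiagonal.sigmaAntidiagonalEquivProd.summable_iff, comp_def,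
    summable_sigma_of_nonneg fun _ => mul_nonneg (mul_nonneg (mul_nonneg (hc _)
      (Nat.cast_nonneg _)) (pow_nonneg hx _)) (pow_nonneg hy _)]
  refine ⟨fun n => Summable.of_finite, hsum.congr fun n => ?_⟩
  rw [tsum_fintype, ← sum_antidiagonal_choose_mul_pow_mul_pow, ← Finset.sum_coe_sort]
  rfl

theorem summable_choose_mul_pow_mul_pow {c : ℕ → ℝ}
    (hc : ∀ x : ℝ, Summable fun n => c n * x ^ n) (x y : ℝ) :
    Summable fun p : ℕ × ℕ => c (p.1 + p.2) * (p.1 + p.2).choose p.1 * x ^ p.1 * y ^ p.2 := by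
  refine Summable.of_norm ?_
  simp only [norm_mul, norm_pow, Real.norm_natCast]
  exact summable_choose_mul_pow_mul_pow_of_nonneg (fun _ => norm_nonneg _) (norm_nonneg x)
    (norm_nonneg y) (summable_norm_mul_pow_of_summable hc ⟨‖x‖ + ‖y‖, by positivity⟩)

theorem hasSum_choose_mul_pow_mul_pow {c : ℕ → ℝ} {g : ℝ → ℝ}
    (hg : ∀ u, HasSum (fun n => c n * u ^ n) (g u)) (x y : ℝ) :
    HasSum (fun p : ℕ × ℕ => c (p.1 + p.2) * (p.1 + p.2).choose p.1 * x ^ p.1 * y ^ p.2)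
      (g (x + y)) := by
  have hs := summable_choose_mul_pow_mul_pow (fun u => (hg u).summable) x y
  convert hs.hasSum
  refine (hg (x + y)).unique (HasSum.sigma
    (HasAntidiagonal.sigmaAntidiagonalEquivProd.hasSum_iff.mpr hs.hasSum) fun n => ?_)
  rw [← sum_antidiagonal_choose_mul_pow_mul_pow, ← Finset.sum_coe_sort]
  exact hasSum_fintype _

/-- The `i`-th coefficient of `∑ c n * u ^ n` re-expanded around `u = y`. -/
noncomputable def changeOriginCoeff (c : ℕ → ℝ) (y : ℝ) (i : ℕ) : ℝ :=
  ∑' k, c (i + k) * (i + k).choose i * y ^ k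

theorem hasSum_changeOriginCoeff {c : ℕ → ℝ} (hc : ∀ x : ℝ, Summable fun n => c n * x ^ n)
    (y : ℝ) (i : ℕ) :
    HasSum (fun k => c (i + k) * (i + k).choose i * y ^ k) (changeOriginCoeff c y i) := by
  simpa [changeOriginCoeff] using ((summable_choose_mul_pow_mul_pow hc 1 y).prod_factor i).hasSum

theorem hasSum_changeOriginCoeff_mul_pow {c : ℕ → ℝ} {g : ℝ → ℝ}
    (hg : ∀ u, HasSum (fun n => c n * u ^ n) (g u)) (x y : ℝ) :
    HasSum (fun i => changeOriginCoeff c y i * x ^ i) (g (x + y)) := by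
  refine (hasSum_choose_mul_pow_mul_pow hg x y).prod_fiberwise fun i => ?_
  rw [mul_comm]
  exact ((hasSum_changeOriginCoeff (fun u => (hg u).summable) y i).mul_left (x ^ i)).congr_fun
    fun k => by dsimp only; ring

theorem iteratedDeriv_mul_comp_sq_add_sq {c : ℕ → ℝ} {g : ℝ → ℝ}
    (hg : ∀ u, HasSum (fun n => c n * u ^ n) (g u)) (s : ℝ) (n : ℕ) :
    iteratedDeriv n (fun t => s * g (s ^ 2 + t ^ 2)) 0
      = n ! * extend (2 * ·) (fun i => s * changeOriginCoeff c (s ^ 2) i) 0 n := by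
  refine iteratedDeriv_zero_eq_factorial_mul_of_hasSum (fun t => ?_) n
  refine hasSum_extend_mul_pow (mul_right_injective₀ two_ne_zero) ?_
  simpa only [add_comm (s ^ 2), pow_mul, mul_assoc] using
    (hasSum_changeOriginCoeff_mul_pow hg (t ^ 2) (s ^ 2)).mul_left s

theorem iteratedDeriv_mul_changeOriginCoeff_sq {c : ℕ → ℝ}
    (hc : ∀ x : ℝ, Summable fun n => c n * x ^ n) (i n : ℕ) :
    iteratedDeriv n (fun s => s * changeOriginCoeff c (s ^ 2) i) 0
      = n ! * extend (2 * · + 1) (fun k => c (i + k) * (i + k).choose i) 0 n := by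
  refine iteratedDeriv_zero_eq_factorial_mul_of_hasSum (fun s => ?_) n
  refine hasSum_extend_mul_pow (fun a b h => by simp_all) ?_
  exact ((hasSum_changeOriginCoeff hc (s ^ 2) i).mul_left s).congr_fun fun k => by ring

theorem md_fst_mul_comp_sq_add_sq_zero {c : ℕ → ℝ} {g : ℝ → ℝ}
    (hg : ∀ u, HasSum (fun n => c n * u ^ n) (g u)) (a1 a2 : ℕ) :
    md a1 a2 (fun b => b.1 * g (b.1 ^ 2 + b.2 ^ 2)) 0
      = if Odd a1 ∧ Even a2 then
          a1 ! * a2 ! * c ((a1 + a2 - 1) / 2) * ((a1 + a2 - 1) / 2).choose ((a1 - 1) / 2)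
        else 0 := by
  simp only [md_apply, Prod.fst_zero, Prod.snd_zero, iteratedDeriv_mul_comp_sq_add_sq hg]
  obtain ⟨m, rfl | rfl⟩ := Nat.even_or_odd' a2
  · simp only [(mul_right_injective₀ two_ne_zero).extend_apply, iteratedDeriv_const_mul_field,
      iteratedDeriv_mul_changeOriginCoeff_sq fun x => (hg x).summable]
    obtain ⟨j, rfl | rfl⟩ := Nat.even_or_odd' a1
    · rw [extend_apply' _ _ _ (by omega), if_neg (by simp)]
      simp
    · have hinj : Injective (2 * · + 1 : ℕ → ℕ) := fun a b h => by simp_all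
      rw [hinj.extend_apply, if_pos (by simp),
        show (2 * j + 1 + 2 * m - 1) / 2 = m + j by omega, show (2 * j + 1 - 1) / 2 = j by omega,
        Nat.choose_symm_add]
      ring
  · have hodd : ∀ s : ℝ, extend (2 * ·) (fun i => s * changeOriginCoeff c (s ^ 2) i) 0
        (2 * m + 1) = 0 := fun s => extend_apply' _ _ _ fun ⟨i, hi⟩ => by omega
    simp [hodd]

theorem hasSum_one_sub_exp_neg (x : ℝ) :
    HasSum (fun n : ℕ => (-1) ^ n * x ^ (n + 1) / (n + 1)!) (1 - exp (-x)) := by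
  have h := (hasSum_nat_add_iff' 1).mpr (NormedSpace.expSeries_div_hasSum_exp (-x))
  rw [← Real.exp_eq_exp_ℝ] at h
  rw [show 1 - exp (-x) = -(exp (-x) - ∑ i ∈ range 1, (-x) ^ i / i !) by simp]
  exact h.neg.congr_fun fun n => by rw [neg_pow x, pow_succ (-1 : ℝ)]; ring

noncomputable def G2Coeff (lam : ℝ) (n : ℕ) : ℝ :=
  1 / (2 * π) * (1 / (2 * lam ^ 2)) ^ (n + 1) * ((-1) ^ n / (n + 1)!)

theorem hasSum_G2Coeff_mul_pow (lam : ℝ) {u : ℝ} (hu : u ≠ 0) :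
    HasSum (fun n => G2Coeff lam n * u ^ n) ((1 - exp (-u / (2 * lam ^ 2))) / (2 * π * u)) := by
  rw [neg_div]
  refine ((hasSum_one_sub_exp_neg (u / (2 * lam ^ 2))).div_const (2 * π * u)).congr_fun
    fun n => ?_
  rw [G2Coeff]
  field_simp
  ring

theorem summable_G2Coeff_mul_pow (lam u : ℝ) : Summable fun n => G2Coeff lam n * u ^ n := by
  rcases eq_or_ne u 0 with rfl | hu
  · exact (hasSum_single 0 fun n hn => by simp [hn]).summable
  · exact (hasSum_G2Coeff_mul_pow lam hu).summable

theorem G2_eq_fst_mul_tsum (lam : ℝ) :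
    G2 lam = fun b => b.1 * ∑' n, G2Coeff lam n * (b.1 ^ 2 + b.2 ^ 2) ^ n := by
  ext b
  rw [G2]
  split_ifs with hb
  · simp [hb]
  · have hu : b.1 ^ 2 + b.2 ^ 2 ≠ 0 := by
      contrapose! hb
      ext <;> simp only [Prod.fst_zero, Prod.snd_zero] <;> nlinarith [sq_nonneg b.1, sq_nonneg b.2]
    rw [(hasSum_G2Coeff_mul_pow lam hu).tsum_eq]
    ring

theorem H2_derivative_formula_general (lam : ℝ) (a1 a2 : ℕ) :
    md a1 a2 (G2 lam) 0
      = if Odd a1 ∧ Even a2 then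
          (1 / (2 * π)) * (1 / (2 * lam ^ 2)) ^ ((a1 + a2 + 1) / 2)
            * ((-1 : ℝ) ^ ((a1 + a2 - 1) / 2) / (Nat.factorial ((a1 + a2 + 1) / 2) : ℝ))
            * (Nat.choose ((a1 + a2 - 1) / 2) ((a1 - 1) / 2) : ℝ)
            * (Nat.factorial a1 : ℝ) * (Nat.factorial a2 : ℝ)
        else 0 := by
  rw [G2_eq_fst_mul_tsum,
    md_fst_mul_comp_sq_add_sq_zero fun u => (summable_G2Coeff_mul_pow lam u).hasSum]
  split_ifs with h
  · obtain ⟨⟨j, rfl⟩, -⟩ := h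
    rw [G2Coeff, show (2 * j + 1 + a2 - 1) / 2 + 1 = (2 * j + 1 + a2 + 1) / 2 by omega]
    ring
  · rfl

/-- the mixed derivatives of  at the origin, i.e. the quantity
 of the paper. -/
theorem H2_derivative_formula (lam : ℝ) (hlam : 0 < lam) (a1 a2 : ℕ) :
    md a1 a2 (G2 lam) 0
      = if Odd a1 ∧ Even a2 then
          (1 / (2 * π)) * (1 / (2 * lam ^ 2)) ^ ((a1 + a2 + 1) / 2)
            * ((-1 : ℝ) ^ ((a1 + a2 - 1) / 2) / (Nat.factorial ((a1 + a2 + 1) / 2) : ℝ))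
            * (Nat.choose ((a1 + a2 - 1) / 2) ((a1 - 1) / 2) : ℝ)
            * (Nat.factorial a1 : ℝ) * (Nat.factorial a2 : ℝ)
        else 0 :=
  H2_derivative_formula_general lam a1 a2
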